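/- Let n be odd and let S be a finite set of pairwise non-attacking positions on the n×n board containing the central position ((n−1)/2, (n−1)/2) and closed under the half-turn rotation ρ(r,c) = (n−1−r, n−1−c). If there exists at least one board position not in S and not attacked by any element of S, then there exist two distinct board positions p and q, each not in S and not attacked by any element of S, not attacking each other, such that S ∪ {p, q} is pairwise non-attacking, contains the central position, and is closed under ρ. (Hence the first player, following the mirroring strategy, always has a reply to any legal move of the second player.) -/

import Mathlib

/-- A position `(r, c)` lies on the `n × n` board iff `0 ≤ r, c ≤ n - 1`. -/
def onBoard (n : ℕ) (p : ℕ × ℕ) : Prop := p.1 ≤ n - 1 ∧ p.2 ≤ n - 1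

/-- Two distinct positions attack each other iff they share a row, a column,
a falling diagonal, or a rising diagonal. -/
def attacks (p q : ℕ × ℕ) : Prop :=
  p ≠ q ∧ (p.1 = q.1 ∨ p.2 = q.2 ∨ p.1 + p.2 = q.1 + q.2 ∨ p.1 + q.2 = q.1 + p.2)

/-- The half-turn rotation `ρ(r, c) = (n - 1 - r, n - 1 - c)` of the `n × n` board. -/
def rot (n : ℕ) (p : ℕ × ℕ) : ℕ × ℕ := (n - 1 - p.1, n - 1 - p.2)

/-- The central position of the `n × n` board for odd `n`. -/
def center (n : ℕ) : ℕ × ℕ := ((n - 1) / 2, (n - 1) / 2)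

/-!
Answer a move `p` with its mirror image `ρ p`. Since `ρ` preserves attacks on the board and
maps `S` to itself, `ρ p` is unattacked by `S` because `p` is. The positions `p` and `ρ p` are
symmetric about the centre, so if they attacked each other they would lie on a common row,
column or diagonal through the centre (for odd `n` the anti-diagonal `r + c = n - 1` is one of
these), and the centre, which is in `S`, would attack `p`.
-/

theorem attacks.symm {p q : ℕ × ℕ} (h : attacks p q) : attacks q p := by
  obtain ⟨hne, hline⟩ := h
  exact ⟨hne.symm, by omega⟩

theorem onBoard_rot (n : ℕ) (p : ℕ × ℕ) : onBoard n (rot n p) :=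
  ⟨Nat.sub_le _ _, Nat.sub_le _ _⟩

theorem rot_rot {n : ℕ} {p : ℕ × ℕ} (hp : onBoard n p) : rot n (rot n p) = p := by
  obtain ⟨h1, h2⟩ := hp
  simp only [rot, Prod.ext_iff]
  omega

theorem rot_ne_self {n : ℕ} {p : ℕ × ℕ} (hpc : p ≠ center n) : rot n p ≠ p := by
  simp only [rot, center, ne_eq, Prod.ext_iff] at hpc ⊢
  omega

theorem attacks_rot {n : ℕ} {p q : ℕ × ℕ} (hp : onBoard n p) (hq : onBoard n q)
    (h : attacks p q) : attacks (rot n p) (rot n q) := by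
  obtain ⟨hp1, hp2⟩ := hp
  obtain ⟨hq1, hq2⟩ := hq
  obtain ⟨hne, hline⟩ := h
  simp only [attacks, rot, ne_eq, Prod.ext_iff] at hne ⊢
  omega

theorem center_attacks_of_attacks_rot {n : ℕ} (hn : Odd n) {p : ℕ × ℕ}
    (h : attacks p (rot n p)) : attacks (center n) p := by
  obtain ⟨k, rfl⟩ := hn
  obtain ⟨hne, hline⟩ := h
  simp only [attacks, rot, center, ne_eq, Prod.ext_iff] at hne hline ⊢
  omega

theorem not_attacks_insert {S : Finset (ℕ × ℕ)} {p : ℕ × ℕ}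
    (hS : ∀ a ∈ S, ∀ b ∈ S, a ≠ b → ¬ attacks a b) (hp : ∀ s ∈ S, ¬ attacks s p) :
    ∀ a ∈ insert p S, ∀ b ∈ insert p S, a ≠ b → ¬ attacks a b := by
  have : (insert p (S : Set (ℕ × ℕ))).Pairwise (fun a b => ¬ attacks a b) :=
    Set.Pairwise.insert hS fun b hb _ => ⟨fun h => hp b hb h.symm, hp b hb⟩
  rwa [← Finset.coe_insert] at this

/-- If S is a pairwise non-attacking, ρ-closed set of board positions containing
the center and some board position outside S is unattacked by S, then there are
two distinct such positions p and q, not attacking each other, with S ∪ {p, q}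
pairwise non-attacking, containing the center, and closed under ρ. -/
theorem mirroring_reply_exists (n : ℕ) (hn : Odd n) (S : Finset (ℕ × ℕ))
    (hb : ∀ p ∈ S, onBoard n p)
    (hna : ∀ p ∈ S, ∀ q ∈ S, p ≠ q → ¬ attacks p q)
    (hcen : center n ∈ S)
    (hcl : ∀ p ∈ S, rot n p ∈ S)
    (hex : ∃ p, onBoard n p ∧ p ∉ S ∧ ∀ s ∈ S, ¬ attacks s p) :
    ∃ p q : ℕ × ℕ, p ≠ q ∧
      onBoard n p ∧ onBoard n q ∧
      p ∉ S ∧ q ∉ S ∧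
      (∀ s ∈ S, ¬ attacks s p) ∧ (∀ s ∈ S, ¬ attacks s q) ∧
      ¬ attacks p q ∧
      (∀ a ∈ insert p (insert q S), ∀ b ∈ insert p (insert q S),
        a ≠ b → ¬ attacks a b) ∧
      center n ∈ insert p (insert q S) ∧
      (∀ a ∈ insert p (insert q S), rot n a ∈ insert p (insert q S)) := by
  obtain ⟨p, hp, hpS, hpfree⟩ := hex
  have hpc : p ≠ center n := by
    rintro rfl
    exact hpS hcen
  have hrS : rot n p ∉ S := fun h => hpS (rot_rot hp ▸ hcl _ h)
  have hrfree : ∀ s ∈ S, ¬ attacks s (rot n p) := fun s hs h =>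
    hpfree _ (hcl s hs) (rot_rot hp ▸ attacks_rot (hb s hs) (onBoard_rot n p) h)
  have hprot : ¬ attacks p (rot n p) := fun h =>
    hpfree _ hcen (center_attacks_of_attacks_rot hn h)
  refine ⟨p, rot n p, (rot_ne_self hpc).symm, hp, onBoard_rot n p, hpS, hrS, hpfree, hrfree,
    hprot, ?_, by simp [hcen], ?_⟩
  · refine not_attacks_insert (not_attacks_insert hna hrfree) ?_
    intro s hs
    rcases Finset.mem_insert.1 hs with rfl | hs
    exacts [fun h => hprot h.symm, hpfree s hs]
  · intro a ha
    simp only [Finset.mem_insert] at ha ⊢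
    rcases ha with rfl | rfl | ha
    exacts [Or.inr (Or.inl rfl), Or.inl (rot_rot hp), Or.inr (Or.inr (hcl a ha))]
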